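/- Let G be a finite abelian group with |G| ≥ 3. Then BO(|G|−2, G) = |G|−2 if |G| is odd; BO(|G|−2, G) = |G|+1 if exp(G) = 2 or |G| = 4; and BO(|G|−2, G) = |G|−1 otherwise. -/

import Mathlib

/-- A finset `S` of an abelian group is `k`-barycentric if it has `k` elements
and the sum of its elements equals `k • g` for some `g ∈ S`. -/
def IsBarycentric {G : Type*} [AddCommGroup G] (k : ℕ) (S : Finset G) : Prop :=
  S.card = k ∧ ∃ g ∈ S, ∑ x ∈ S, x = k • g

/-- The `k`-th barycentric Olson constant: the smallest `ℓ` such that every subset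
of `G` with at least `ℓ` elements contains a `k`-barycentric subset. -/
noncomputable def BO (k : ℕ) (G : Type*) [AddCommGroup G] [Fintype G] : ℕ :=
  sInf {ℓ : ℕ | ∀ A : Finset G, ℓ ≤ A.card → ∃ B ⊆ A, IsBarycentric k B}

/-- The 2-rank of a finite abelian group `G`: the number of invariant factors of `G`
divisible by 2, equivalently `log₂` of the number of solutions of `2 • g = 0`. -/
noncomputable def twoRank (G : Type*) [AddCommGroup G] : ℕ :=
  Nat.log 2 (Nat.card {g : G // 2 • g = 0})

/-!
A set of `|G| - 2` elements is the complement of a pair `{a, b}`; writing `σ` for the sum of all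
elements of `G`, it is barycentric iff `2 • g = a + b - σ` for some `g ∉ {a, b}`.
If `|G|` is odd, doubling is bijective and `σ = 0`, so every such set is barycentric.
If `exp(G) = 2`, then `σ = 0` and `2 • g = 0` forces `a = b`; if `|G| = 4`, then `x + y = 2 • x`
forces `x = y`: no barycentric set exists at all.
Otherwise `G` has elements of order two but is not `2`-torsion, so the kernel and the image of
doubling both have at most `|G| / 2` elements. Counting exceptions, every set missing one element
contains a barycentric set, while the complement of `{0, d + σ}` with `d ∉ 2G ∪ {-σ}` contains none.
-/

open Finset

theorem exists_eq_compl_pair {α : Type*} [Fintype α] [DecidableEq α] {B : Finset α}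
    (hα : 2 ≤ Fintype.card α) (hB : #B = Fintype.card α - 2) : ∃ a b : α, a ≠ b ∧ B = {a, b}ᶜ := by
  obtain ⟨a, b, hab, h⟩ := card_eq_two.1 (by rw [card_compl, hB]; omega : #Bᶜ = 2)
  exact ⟨a, b, hab, by rw [← h, compl_compl]⟩

theorem not_isBarycentric_two {G : Type*} [AddCommGroup G] (B : Finset G) :
    ¬ IsBarycentric 2 B := by
  classical
  rintro ⟨hB, g, hg, hsum⟩
  obtain ⟨x, y, hxy, rfl⟩ := card_eq_two.1 hB
  rw [sum_pair hxy, two_nsmul] at hsum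
  rcases mem_insert.1 hg with rfl | hg
  · exact hxy (add_left_cancel hsum).symm
  · rw [mem_singleton.1 hg] at hsum
    exact hxy (add_right_cancel hsum)

section FiniteAbelianGroup

variable {G : Type*} [AddCommGroup G] [Fintype G]

theorem BO_le_of_forall {k m : ℕ}
    (h : ∀ A : Finset G, m ≤ #A → ∃ B ⊆ A, IsBarycentric k B) : BO k G ≤ m :=
  Nat.sInf_le h

theorem card_lt_BO {k : ℕ} {A : Finset G} (hA : ∀ B ⊆ A, ¬ IsBarycentric k B) :
    #A < BO k G := by
  have hne : {ℓ : ℕ | ∀ A : Finset G, ℓ ≤ #A → ∃ B ⊆ A, IsBarycentric k B}.Nonempty :=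
    ⟨Fintype.card G + 1, fun A hA => absurd (card_le_univ A) (by omega)⟩
  by_contra! hle
  obtain ⟨B, hBA, hB⟩ := Nat.sInf_mem hne A hle
  exact hA B hBA hB

theorem two_nsmul_bijective_of_odd_card (h : Odd (Fintype.card G)) :
    Function.Bijective fun g : G => 2 • g :=
  Nat.Coprime.nsmul_right_bijective
    (Nat.coprime_two_right.2 (Nat.card_eq_fintype_card (α := G) ▸ h))

theorem two_nsmul_sum_univ : 2 • ∑ x : G, x = 0 := by
  have h : ∑ x : G, -x = ∑ x : G, x := Fintype.sum_equiv (Equiv.neg G) _ _ fun _ => rfl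
  rw [sum_neg_distrib, neg_eq_iff_add_eq_zero] at h
  rw [two_nsmul, h]

theorem sum_univ_eq_zero_of_odd_card (h : Odd (Fintype.card G)) : ∑ x : G, x = 0 :=
  (two_nsmul_bijective_of_odd_card h).injective (by simp only [two_nsmul_sum_univ, smul_zero])

theorem card_fiber_eq_card_ker {H : Type*} [AddGroup H] [DecidableEq H] (f : G →+ H)
    (a : G) : #{x | f x = f a} = Nat.card f.ker := by
  rw [← Fintype.card_subtype, ← Nat.card_eq_fintype_card]
  exact Nat.card_congr (f.fiberEquivKer a)

theorem card_fiber_le_card_ker {H : Type*} [AddGroup H] [DecidableEq H] (f : G →+ H)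
    (y : H) : #{x | f x = y} ≤ Nat.card f.ker := by
  by_cases hy : ∃ a, f a = y
  · obtain ⟨a, rfl⟩ := hy
    exact (card_fiber_eq_card_ker f a).le
  · push Not at hy
    simp [hy]

theorem map_sum_univ_of_surjective {Q : Type*} [AddCommGroup Q] [Fintype Q] [DecidableEq Q]
    (f : G →+ Q) (hf : Function.Surjective f) :
    f (∑ x : G, x) = Nat.card f.ker • ∑ q : Q, q := by
  rw [map_sum, smul_sum]
  refine (sum_fiberwise' univ f id).symm.trans (sum_congr rfl fun q _ => ?_)
  obtain ⟨a, rfl⟩ := hf q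
  rw [sum_const, card_fiber_eq_card_ker, id]

/-- Modulo `K`, the sum of all elements is `|K|` times the sum of all elements of `G ⧸ K`, which
is killed by `2`. -/
theorem sum_univ_mem_of_even_card (K : AddSubgroup G) (hK : Even (Nat.card K)) :
    ∑ x : G, x ∈ K := by
  classical
  obtain ⟨m, hm⟩ := hK.two_dvd
  rw [← QuotientAddGroup.ker_mk' K, AddMonoidHom.mem_ker,
    map_sum_univ_of_surjective _ (QuotientAddGroup.mk'_surjective K), QuotientAddGroup.ker_mk',
    hm, mul_nsmul, two_nsmul_sum_univ, nsmul_zero]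

theorem sum_univ_eq_zero_of_exponent_eq_two (h : AddMonoid.exponent G = 2)
    (hG : 3 ≤ Fintype.card G) : ∑ x : G, x = 0 := by
  classical
  have : Fact (Nat.Prime 2) := ⟨Nat.prime_two⟩
  obtain ⟨u, -, hu⟩ := exists_mem_notMem_of_card_lt_card
    (s := {0, ∑ x : G, x}) (t := univ) (card_le_two.trans_lt (by rw [card_univ]; omega))
  rw [mem_insert, mem_singleton, not_or] at hu
  have horder : addOrderOf u = 2 :=
    addOrderOf_eq_prime (h ▸ AddMonoid.exponent_nsmul_eq_zero u) hu.1
  obtain ⟨k, hk⟩ := AddSubgroup.mem_zmultiples_iff.1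
    (sum_univ_mem_of_even_card (AddSubgroup.zmultiples u)
      (by rw [Nat.card_zmultiples, horder]; exact even_two))
  rw [← mod_addOrderOf_zsmul, horder, Nat.cast_ofNat] at hk
  rcases Int.emod_two_eq_zero_or_one k with hk2 | hk2
  · rw [← hk, hk2, zero_zsmul]
  · rw [hk2, one_zsmul] at hk
    exact absurd hk hu.2

theorem card_sub_two_nsmul (hG : 2 ≤ Fintype.card G) (g : G) :
    (Fintype.card G - 2) • g = -(2 • g) := by
  refine eq_neg_of_add_eq_zero_left ?_
  rw [← add_nsmul, Nat.sub_add_cancel hG, card_nsmul_eq_zero]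

theorem isBarycentric_compl_pair_iff [DecidableEq G] {a b : G} (hab : a ≠ b) :
    IsBarycentric (Fintype.card G - 2) ({a, b}ᶜ : Finset G) ↔
      ∃ g, g ≠ a ∧ g ≠ b ∧ 2 • g = a + b - ∑ x : G, x := by
  have hcard : #({a, b}ᶜ : Finset G) = Fintype.card G - 2 := by rw [card_compl, card_pair hab]
  have hG : 2 ≤ Fintype.card G := (card_pair hab).symm.trans_le (card_le_univ _)
  have hsum : ∑ x ∈ {a, b}ᶜ, x = ∑ x : G, x - (a + b) := by
    rw [eq_sub_iff_add_eq, ← sum_compl_add_sum {a, b}, sum_pair hab]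
  simp only [IsBarycentric, hcard, true_and, mem_compl, mem_insert, mem_singleton, not_or, hsum,
    card_sub_two_nsmul hG, and_assoc]
  refine exists_congr fun g => and_congr_right' (and_congr_right' ?_)
  rw [← neg_sub, neg_inj, eq_comm]

theorem isBarycentric_of_odd_card (hG : 3 ≤ Fintype.card G) (hodd : Odd (Fintype.card G))
    {B : Finset G} (hB : #B = Fintype.card G - 2) : IsBarycentric (Fintype.card G - 2) B := by
  classical
  obtain ⟨a, b, hab, rfl⟩ := exists_eq_compl_pair (by omega) hB
  obtain ⟨g, hg : 2 • g = a + b⟩ := (two_nsmul_bijective_of_odd_card hodd).surjective (a + b)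
  refine (isBarycentric_compl_pair_iff hab).2
    ⟨g, ?_, ?_, by rw [hg, sum_univ_eq_zero_of_odd_card hodd, sub_zero]⟩
  all_goals rintro rfl; rw [two_nsmul] at hg
  · exact hab (add_left_cancel hg)
  · exact hab (add_right_cancel hg).symm

theorem not_isBarycentric_of_exponent_eq_two (hG : 3 ≤ Fintype.card G)
    (hexp : AddMonoid.exponent G = 2) (B : Finset G) :
    ¬ IsBarycentric (Fintype.card G - 2) B := by
  classical
  intro hbary
  obtain ⟨a, b, hab, rfl⟩ := exists_eq_compl_pair (by omega) hbary.1
  obtain ⟨g, -, -, hg⟩ := (isBarycentric_compl_pair_iff hab).1 hbary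
  have h2 : ∀ x : G, 2 • x = 0 := fun x => hexp ▸ AddMonoid.exponent_nsmul_eq_zero x
  rw [h2, sum_univ_eq_zero_of_exponent_eq_two hexp hG, sub_zero] at hg
  refine hab (sub_eq_zero.1 ?_)
  calc a - b = a + b - 2 • b := by rw [two_nsmul]; abel
    _ = 0 := by rw [← hg, h2, sub_zero]

theorem card_ker_mul_card_range {H : Type*} [AddGroup H] (f : G →+ H) :
    Nat.card f.ker * Nat.card f.range = Fintype.card G := by
  rw [← AddSubgroup.index_ker f, f.ker.card_mul_index, Nat.card_eq_fintype_card]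

theorem two_mul_card_ker_le {H : Type*} [AddGroup H] (f : G →+ H) (hf : ∃ g, f g ≠ 0) :
    2 * Nat.card f.ker ≤ Fintype.card G := by
  obtain ⟨g, hg⟩ := hf
  have : Finite f.range := Finite.of_surjective _ f.rangeRestrict_surjective
  have hrange : 2 ≤ Nat.card f.range := (f.range.one_lt_card_iff_ne_bot).2
    fun h => hg (AddSubgroup.mem_bot.1 (h ▸ AddMonoidHom.mem_range.2 ⟨g, rfl⟩))
  rw [← card_ker_mul_card_range f, mul_comm]
  exact Nat.mul_le_mul_left _ hrange

theorem two_mul_card_range_le {H : Type*} [AddGroup H] (f : G →+ H)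
    (hf : ∃ t, t ≠ 0 ∧ f t = 0) : 2 * Nat.card f.range ≤ Fintype.card G := by
  obtain ⟨t, ht, hft⟩ := hf
  have hker : 2 ≤ Nat.card f.ker := (f.ker.one_lt_card_iff_ne_bot).2
    fun h => ht (AddSubgroup.mem_bot.1 (h ▸ f.mem_ker.2 hft))
  rw [← card_ker_mul_card_range f]
  exact Nat.mul_le_mul_right _ hker

theorem exists_two_nsmul_ne_zero (hG : 2 ≤ Fintype.card G) (hexp : AddMonoid.exponent G ≠ 2) :
    ∃ g : G, 2 • g ≠ 0 := by
  by_contra! h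
  rcases (Nat.dvd_prime Nat.prime_two).1 (AddMonoid.exponent_dvd_of_forall_nsmul_eq_zero h)
    with h1 | h2
  · have := Fintype.card_le_one_iff_subsingleton.2 (AddMonoid.exp_eq_one_iff.1 h1)
    omega
  · exact hexp h2

theorem exists_ne_zero_two_nsmul_eq_zero (heven : Even (Fintype.card G)) :
    ∃ t : G, t ≠ 0 ∧ 2 • t = 0 := by
  have : Fact (Nat.Prime 2) := ⟨Nat.prime_two⟩
  obtain ⟨t, ht⟩ := exists_prime_addOrderOf_dvd_card 2 heven.two_dvd
  refine ⟨t, fun h => ?_, ht ▸ addOrderOf_nsmul_eq_zero t⟩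
  rw [h, addOrderOf_zero] at ht
  exact absurd ht (by norm_num)

/-- Any `g` other than `c`, `c - σ` and the solutions of `2 • g = 2 • c - σ` is a barycentre of
the complement of `{c, 2 • g + σ - c}`; there are at most `|G| / 2 + 2` such exceptions. -/
theorem exists_isBarycentric_subset_of_card_sub_one_le (hG : 4 < Fintype.card G)
    (hg : ∃ g : G, 2 • g ≠ 0) {A : Finset G} (hA : Fintype.card G - 1 ≤ #A) :
    ∃ B ⊆ A, IsBarycentric (Fintype.card G - 2) B := by
  classical
  obtain ⟨c, hc⟩ : ∃ c, Aᶜ ⊆ {c} :=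
    card_le_one_iff_subset_singleton.1 (by rw [card_compl]; omega)
  have hker := two_mul_card_ker_le (nsmulAddMonoidHom 2 : G →+ G) hg
  have hexceptions :
      #({c, c - ∑ x : G, x} ∪ ({g | 2 • g = 2 • c - ∑ x : G, x} : Finset G)) <
        #(univ : Finset G) :=
    calc _ ≤ 2 + Nat.card (nsmulAddMonoidHom 2 : G →+ G).ker :=
          (card_union_le _ _).trans (add_le_add card_le_two (card_fiber_le_card_ker _ _))
      _ < #(univ : Finset G) := by rw [card_univ]; omega
  obtain ⟨g, -, hg⟩ := exists_mem_notMem_of_card_lt_card hexceptions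
  simp only [mem_union, mem_insert, mem_singleton, mem_filter, mem_univ, true_and, not_or] at hg
  obtain ⟨⟨hgc, hgc'⟩, hgg⟩ := hg
  have hcb : c ≠ 2 • g + ∑ x : G, x - c := by
    contrapose! hgg
    linear_combination (norm := module) -hgg
  refine ⟨{c, 2 • g + ∑ x : G, x - c}ᶜ, ?_,
    (isBarycentric_compl_pair_iff hcb).2 ⟨g, hgc, ?_, by abel⟩⟩
  · exact (compl_subset_compl.2 (singleton_subset_iff.2 (mem_insert_self _ _))).trans
      (compl_le_iff_compl_le.1 hc)
  · contrapose! hgc'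
    linear_combination (norm := module) -hgc'

/-- The witness is the complement of `{0, d + σ}` for some `d ∉ 2G` with `d ≠ -σ`: a barycentre
`g` would satisfy `2 • g = d`. -/
theorem exists_card_sub_two_not_isBarycentric (hG : 4 < Fintype.card G)
    (ht : ∃ t : G, t ≠ 0 ∧ 2 • t = 0) :
    ∃ A : Finset G, #A = Fintype.card G - 2 ∧ ∀ B ⊆ A, ¬ IsBarycentric (Fintype.card G - 2) B := by
  classical
  set D : G →+ G := nsmulAddMonoidHom 2
  have hrange := two_mul_card_range_le D ht
  have hexceptions :
      #(insert (-∑ x : G, x) ({y | y ∈ D.range} : Finset G)) < #(univ : Finset G) := by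
    have : #{y | y ∈ D.range} = Nat.card D.range := by
      rw [← Fintype.card_subtype, ← Nat.card_eq_fintype_card]
    rw [card_univ]
    have := card_insert_le (-∑ x : G, x) ({y | y ∈ D.range} : Finset G)
    omega
  obtain ⟨d, -, hd⟩ := exists_mem_notMem_of_card_lt_card hexceptions
  simp only [mem_insert, mem_filter, mem_univ, true_and, not_or] at hd
  obtain ⟨hdσ, hdD⟩ := hd
  have hb : (0 : G) ≠ d + ∑ x : G, x := fun h => hdσ (eq_neg_of_add_eq_zero_left h.symm)
  refine ⟨{0, d + ∑ x : G, x}ᶜ, by rw [card_compl, card_pair hb], fun B hBA hB => ?_⟩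
  rw [eq_of_subset_of_card_le hBA (by rw [hB.1, card_compl, card_pair hb]),
    isBarycentric_compl_pair_iff hb] at hB
  obtain ⟨g, -, -, hg⟩ := hB
  exact hdD ⟨g, by rw [nsmulAddMonoidHom_apply, hg]; abel⟩

end FiniteAbelianGroup

theorem BO_card_sub_two (G : Type*) [AddCommGroup G] [Fintype G]
    (hG : 3 ≤ Fintype.card G) :
    (Odd (Fintype.card G) → BO (Fintype.card G - 2) G = Fintype.card G - 2) ∧
    (AddMonoid.exponent G = 2 ∨ Fintype.card G = 4 →
      BO (Fintype.card G - 2) G = Fintype.card G + 1) ∧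
    (¬ Odd (Fintype.card G) → ¬ (AddMonoid.exponent G = 2 ∨ Fintype.card G = 4) →
      BO (Fintype.card G - 2) G = Fintype.card G - 1) := by
  refine ⟨fun hodd => ?_, fun hdeg => ?_, fun heven hdeg => ?_⟩
  · refine le_antisymm (BO_le_of_forall fun A hA => ?_) ?_
    · obtain ⟨B, hBA, hB⟩ := exists_subset_card_eq hA
      exact ⟨B, hBA, isBarycentric_of_odd_card hG hodd hB⟩
    · obtain ⟨A, -, hA⟩ := exists_subset_card_eq (s := (univ : Finset G))
        (n := Fintype.card G - 3) (by simp)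
      have := card_lt_BO (k := Fintype.card G - 2) (A := A) fun B hBA hB =>
        absurd (hB.1 ▸ card_le_card hBA) (by omega)
      omega
  · have hnone : ∀ B : Finset G, ¬ IsBarycentric (Fintype.card G - 2) B := by
      rcases hdeg with hexp | h4
      · exact not_isBarycentric_of_exponent_eq_two hG hexp
      · simpa only [h4] using not_isBarycentric_two
    refine le_antisymm (BO_le_of_forall fun A hA => absurd (card_le_univ A) (by omega)) ?_
    simpa using card_lt_BO (A := univ) fun B _ => hnone B
  · push Not at hdeg
    rw [Nat.not_odd_iff_even] at heven
    have hG4 : 4 < Fintype.card G := by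
      obtain ⟨m, hm⟩ := heven
      omega
    refine le_antisymm (BO_le_of_forall fun A hA => exists_isBarycentric_subset_of_card_sub_one_le
      hG4 (exists_two_nsmul_ne_zero (by omega) hdeg.1) hA) ?_
    obtain ⟨A, hA, hnone⟩ :=
      exists_card_sub_two_not_isBarycentric hG4 (exists_ne_zero_two_nsmul_eq_zero heven)
    have := card_lt_BO hnone
    omega
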